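/- Let (X,d,μ) be a space of homogeneous type whose measure satisfies the reverse doubling condition with constants A > 1 and B > 1. Let p be a μ-measurable function with 0 < p₋ ≤ p₊ < ∞ and suppose there is a point x₀ ∈ X such that p ∈ LH(X,x₀). Then there exist positive constants r₀ and C (possibly depending on x₀) such that for all 0 < r ≤ r₀: (μ(B_A))^{p₋(B_A) − p₊(B_A)} ≤ C, where B_A := B(x₀,Ar)∖B(x₀,r). -/

import Mathlib

open MeasureTheory Set ENNReal

noncomputable section

namespace TwoWeight

/-- A quasimetric measure space `(X, d, μ)`. -/
structure QMS (X : Type*) [MeasurableSpace X] where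
  d : X → X → ℝ
  μ : Measure X
  a₀ : ℝ
  a₁ : ℝ
  a₀_pos : 0 < a₀
  a₁_pos : 0 < a₁
  d_nonneg : ∀ x y, 0 ≤ d x y
  d_eq_zero_iff : ∀ x y, d x y = 0 ↔ x = y
  d_triangle : ∀ x y z, d x y ≤ a₁ * (d x z + d z y)
  d_symm : ∀ x y, d x y ≤ a₀ * d y x
  ball_measurable : ∀ x r, MeasurableSet {y | d x y < r}
  ball_lt_top : ∀ x r, μ {y | d x y < r} < ⊤
  singleton_null : ∀ x, μ {x} = 0
  annulus_nonempty : ∀ x (r R : ℝ), 0 < r → r < R →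
    ENNReal.ofReal R < ⨆ (u : X) (v : X), ENNReal.ofReal (d u v) →
    ({y | d x y < R} \ {y | d x y < r}).Nonempty

/-- `p₋(E)`, the infimum of `p` over a set. -/
def infOn {X : Type*} (p : X → ℝ) (E : Set X) : ℝ := sInf (p '' E)

/-- `p₊(E)`, the supremum of `p` over a set. -/
def supOn {X : Type*} (p : X → ℝ) (E : Set X) : ℝ := sSup (p '' E)

/-- The conjugate exponent `t' = t/(t-1)`. -/
def conj (t : ℝ) : ℝ := t / (t - 1)

namespace QMS

variable {X : Type*} [MeasurableSpace X] (S : QMS X)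

/-- The ball `B(x,r)`. -/
def ball (x : X) (r : ℝ) : Set X := {y | S.d x y < r}

/-- The closed ball `B̄(x,r)`. -/
def cball (x : X) (r : ℝ) : Set X := {y | S.d x y ≤ r}

/-- The diameter `L` of the space, as an extended real. -/
def L : ℝ≥0∞ := ⨆ (u : X) (v : X), ENNReal.ofReal (S.d u v)

/-- The doubling condition for `μ`: SHT = QMS + doubling. -/
def doubling : Prop :=
  ∃ c : ℝ, 0 < c ∧ ∀ x r, S.μ (S.ball x (2 * r)) ≤ ENNReal.ofReal c * S.μ (S.ball x r)

/-- The reverse doubling condition with constants `A, B`. -/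
def revDoubling (A B : ℝ) : Prop :=
  ∀ x r, 0 < r → ENNReal.ofReal B * S.μ (S.ball x r) ≤ S.μ (S.ball x (A * r))

/-- μ is upper Ahlfors 1-regular. -/
def upperAhlfors1 : Prop :=
  ∃ c : ℝ, 0 < c ∧ ∀ x r, 0 < r → S.μ (S.ball x r) ≤ ENNReal.ofReal (c * r)

/-- `μ(B_{xy})` as a real number. -/
def mB (x y : X) : ℝ := (S.μ (S.ball x (S.d x y))).toReal

/-- log-Hölder type condition on `X` (with respect to measures of balls). -/
def LH (p : X → ℝ) : Prop :=
  ∃ b c : ℝ, 0 < b ∧ 0 < c ∧ ∀ x y, S.d x y ≤ b →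
    |p x - p y| ≤ c / (-Real.log (S.mB x y))

/-- log-Hölder type condition at a point `x`. -/
def LHAt (p : X → ℝ) (x : X) : Prop :=
  ∃ b c : ℝ, 0 < b ∧ 0 < c ∧ ∀ y, S.d x y ≤ b →
    |p x - p y| ≤ c / (-Real.log (S.mB x y))

/-- log-Hölder condition on `X` with respect to the quasimetric. -/
def LHbar (p : X → ℝ) : Prop :=
  ∃ b c : ℝ, 0 < b ∧ 0 < c ∧ ∀ x y, S.d x y ≤ b →
    |p x - p y| ≤ c / (-Real.log (S.d x y))

/-- log-Hölder condition at a point with respect to the quasimetric. -/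
def LHbarAt (p : X → ℝ) (x : X) : Prop :=
  ∃ b c : ℝ, 0 < b ∧ 0 < c ∧ ∀ y, S.d x y ≤ b →
    |p x - p y| ≤ c / (-Real.log (S.d x y))

/-- The class `𝒫(N)`. -/
def PClass (p : X → ℝ) (N : ℝ) : Prop :=
  ∃ b c : ℝ, 0 < b ∧ 0 < c ∧ ∀ x r, 0 < r → r ≤ b →
    (S.μ (S.ball x (N * r))).toReal ^ (infOn p (S.ball x r) - supOn p (S.ball x r)) ≤ c

/-- The class `𝒫(N, x)`. -/
def PClassAt (p : X → ℝ) (N : ℝ) (x : X) : Prop :=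
  ∃ b c : ℝ, 0 < b ∧ 0 < c ∧ ∀ r, 0 < r → r ≤ b →
    (S.μ (S.ball x (N * r))).toReal ^ (infOn p (S.ball x r) - supOn p (S.ball x r)) ≤ c

/-- The modular `S_p(f) = ∫ |f|^{p(x)} dμ`. -/
def modular (p : X → ℝ) (f : X → ℝ) : ℝ≥0∞ :=
  ∫⁻ x, ENNReal.ofReal (|f x| ^ p x) ∂S.μ

/-- Membership in the variable exponent Lebesgue space `L^{p(·)}(X)`. -/
def MemVL (p : X → ℝ) (f : X → ℝ) : Prop := S.modular p f < ⊤

/-- The norm of the variable exponent Lebesgue space `L^{p(·)}(X)`. -/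
def VNorm (p : X → ℝ) (f : X → ℝ) : ℝ :=
  sInf {l : ℝ | 0 < l ∧ S.modular p (fun x => f x / l) ≤ 1}

/-- Boundedness of an operator from `L^{p(·)}(X)` to `L^{q(·)}(X)`. -/
def BoundedVL (p q : X → ℝ) (T : (X → ℝ) → X → ℝ) : Prop :=
  ∃ c : ℝ, 0 < c ∧ ∀ f, S.MemVL p f → S.VNorm q (T f) ≤ c * S.VNorm p f

/-- The Hardy type transform `T_{v,w}`. -/
def Tvw (x₀ : X) (v w : X → ℝ) (f : X → ℝ) : X → ℝ :=
  fun x => v x * ∫ y in S.ball x₀ (S.d x₀ x), f y * w y ∂S.μ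

/-- The dual Hardy type transform `T'_{v,w}`. -/
def Tvw' (x₀ : X) (v w : X → ℝ) (f : X → ℝ) : X → ℝ :=
  fun x => v x * ∫ y in (S.cball x₀ (S.d x₀ x))ᶜ, f y * w y ∂S.μ

/-- The potential operator `T_α` with constant exponent. -/
def Tpot (α : ℝ) (f : X → ℝ) : X → ℝ :=
  fun x => ∫ y, f y * (S.μ (S.ball x (S.d x y))).toReal ^ (α - 1) ∂S.μ

/-- The potential operator `T_{α(·)}` with variable exponent. -/
def TpotVar (α : X → ℝ) (f : X → ℝ) : X → ℝ :=
  fun x => ∫ y, f y * (S.μ (S.ball x (S.d x y))).toReal ^ (α x - 1) ∂S.μ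

/-- The potential operator `I_α` with constant exponent. -/
def Ipot (α : ℝ) (f : X → ℝ) : X → ℝ :=
  fun x => ∫ y, f y * S.d x y ^ (α - 1) ∂S.μ

/-- The potential operator `I_{α(·)}` with variable exponent. -/
def IpotVar (α : X → ℝ) (f : X → ℝ) : X → ℝ :=
  fun x => ∫ y, f y * S.d x y ^ (α x - 1) ∂S.μ

/-- The Hardy–Littlewood maximal operator. -/
def maximal (f : X → ℝ) : X → ℝ :=
  fun x => ⨆ (r : ℝ) (_ : 0 < r), (S.μ (S.ball x r)).toReal⁻¹ * ∫ y in S.ball x r, |f y| ∂S.μ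

/-- The set `F_x` (with reverse doubling constant `A`). -/
def Fset (x₀ : X) (A : ℝ) (x : X) : Set X :=
  {y | S.d x₀ x / (A ^ 2 * S.a₁) ≤ S.d x₀ y ∧ S.d x₀ y ≤ A ^ 2 * S.a₁ * S.d x₀ x}

/-- `p₀(x) = p₋(B̄_{x₀x})`. -/
def p0 (p : X → ℝ) (x₀ x : X) : ℝ := infOn p (S.cball x₀ (S.d x₀ x))

/-- `p̃₀(x)`. -/
def p0t (p : X → ℝ) (x₀ : X) (a pc : ℝ) (x : X) : ℝ :=
  if S.d x₀ x ≤ a then S.p0 p x₀ x else pc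

/-- `p₁(x) = p₋(B̄(x₀,a) \ B_{x₀x})`. -/
def p1 (p : X → ℝ) (x₀ : X) (a : ℝ) (x : X) : ℝ :=
  infOn p (S.cball x₀ a \ S.ball x₀ (S.d x₀ x))

/-- `p̃₁(x)`. -/
def p1t (p : X → ℝ) (x₀ : X) (a pc : ℝ) (x : X) : ℝ :=
  if S.d x₀ x ≤ a then S.p1 p x₀ a x else pc

/-- The annuli `I_{2,k}`. -/
def I2k (x₀ : X) (A : ℝ) (k : ℤ) : Set X :=
  if S.L = ⊤ then S.cball x₀ (A ^ (k + 2) * S.a₁) \ S.ball x₀ (A ^ (k - 1) / S.a₁)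
  else S.cball x₀ (A ^ (k + 2) * S.a₁ * S.L.toReal) \ S.ball x₀ (A ^ (k - 1) * S.L.toReal / S.a₁)

/-- A positive increasing function on `(0, 2L)`. -/
def PosIncOn (v : ℝ → ℝ) : Prop :=
  (∀ t : ℝ, 0 < t → ENNReal.ofReal t < 2 * S.L → 0 < v t) ∧
  ∀ s t : ℝ, 0 < s → s ≤ t → ENNReal.ofReal t < 2 * S.L → v s ≤ v t

end QMS

end TwoWeight

/-
Put `M = μ(B(x₀,Ar))` and `Λ = -log M`. For small `r` we have `M ≤ 1/2`, and since every
`B_{x₀y}` with `y ∈ B_A` lies in `B(x₀,Ar)`, the log-Hölder condition at `x₀` confines `p` on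
`B_A` to the interval `[p(x₀) - c/Λ, p(x₀) + c/Λ]`, so `p₋(B_A) - p₊(B_A) ≥ -2c/Λ`. Reverse
doubling gives `μ(B_A) ≥ (1 - 1/B) M`, i.e. `-log μ(B_A) ≤ Λ + log (B/(B-1))`. Hence
`μ(B_A)^{p₋ - p₊} ≤ exp ((2c/Λ)(Λ + log (B/(B-1))))`, which is bounded because `Λ ≥ log 2`.
-/

open Filter Topology

namespace TwoWeight

theorem neg_two_mul_le_infOn_sub_supOn {X : Type*} {p : X → ℝ} {E : Set X} {x : X} {δ : ℝ}
    (hE : E.Nonempty) (h : ∀ y ∈ E, |p x - p y| ≤ δ) :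
    -(2 * δ) ≤ infOn p E - supOn p E := by
  have hsup : supOn p E ≤ p x + δ :=
    csSup_le (hE.image p) <| by
      rintro _ ⟨y, hy, rfl⟩
      linarith [(abs_le.1 (h y hy)).1]
  have hinf : p x - δ ≤ infOn p E :=
    le_csInf (hE.image p) <| by
      rintro _ ⟨y, hy, rfl⟩
      linarith [(abs_le.1 (h y hy)).2]
  linarith

/-- The constant `δ (1 + log q / log 2)` is what remains of `δ (Λ + log q) / Λ` once `Λ ≥ log 2`. -/
theorem rpow_le_exp_of_le_mul {m M q δ e : ℝ} (hm : 0 < m) (hmM : m ≤ M) (hM : M ≤ 1 / 2)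
    (hMq : M ≤ q * m) (hδ : 0 ≤ δ) (he : -(δ / -Real.log M) ≤ e) :
    m ^ e ≤ Real.exp (δ * (1 + Real.log q / Real.log 2)) := by
  have hM0 : 0 < M := hm.trans_le hmM
  have hq : 1 ≤ q := le_of_mul_le_mul_right (by linarith : 1 * m ≤ q * m) hm
  set Λ := -Real.log M
  have hlog2 : 0 < Real.log 2 := Real.log_pos one_lt_two
  have hΛ : Real.log 2 ≤ Λ := by
    have := Real.log_le_log hM0 hM
    rw [one_div, Real.log_inv] at this
    linarith
  have hΛ0 : 0 < Λ := hlog2.trans_le hΛ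
  have hlogq : 0 ≤ Real.log q := Real.log_nonneg hq
  have hlogm : -Real.log m ≤ Λ + Real.log q := by
    have := Real.log_le_log hM0 hMq
    rw [Real.log_mul (by positivity) hm.ne'] at this
    linarith
  refine (Real.rpow_le_rpow_of_exponent_ge hm (by linarith) he).trans ?_
  rw [Real.rpow_def_of_pos hm, Real.exp_le_exp]
  calc Real.log m * -(δ / Λ) = δ / Λ * -Real.log m := by ring
    _ ≤ δ / Λ * (Λ + Real.log q) := by gcongr
    _ = δ + δ * Real.log q / Λ := by field_simp
    _ ≤ δ + δ * Real.log q / Real.log 2 := by gcongr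
    _ = δ * (1 + Real.log q / Real.log 2) := by ring

namespace QMS

variable {X : Type*} [MeasurableSpace X] (S : QMS X)

theorem ball_subset_ball {x : X} {r R : ℝ} (h : r ≤ R) : S.ball x r ⊆ S.ball x R :=
  fun _ hy => lt_of_lt_of_le hy h

theorem biInter_ball_eq_singleton (x : X) : ⋂ r > (0 : ℝ), S.ball x r = {x} := by
  ext y
  simp only [mem_iInter, mem_singleton_iff, ball, mem_ofPred_eq]
  constructor
  · intro h
    have hd : S.d x y ≤ 0 := le_of_forall_pos_lt_add fun ε hε => by simpa using h ε hε
    exact ((S.d_eq_zero_iff x y).1 (le_antisymm hd (S.d_nonneg x y))).symm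
  · rintro rfl r hr
    rwa [(S.d_eq_zero_iff y y).2 rfl]

theorem tendsto_measure_ball_toReal (x : X) :
    Tendsto (fun r => (S.μ (S.ball x r)).toReal) (𝓝[>] 0) (𝓝 0) := by
  have h := tendsto_measure_biInter_gt (μ := S.μ) (s := S.ball x) (a := 0)
    (fun r _ => (S.ball_measurable x r).nullMeasurableSet)
    (fun _ _ _ hij => S.ball_subset_ball hij) ⟨1, one_pos, (S.ball_lt_top x 1).ne⟩
  rw [S.biInter_ball_eq_singleton, S.singleton_null] at h
  simpa [Function.comp_def] using (ENNReal.tendsto_toReal ENNReal.zero_ne_top).comp h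

theorem abs_sub_le_of_mem_ball {p : X → ℝ} {x y : X} {b c R : ℝ} (hc : 0 ≤ c)
    (hLH : ∀ y, S.d x y ≤ b → |p x - p y| ≤ c / -Real.log (S.mB x y)) (hRb : R ≤ b)
    (hR : (S.μ (S.ball x R)).toReal < 1) (hy : y ∈ S.ball x R) :
    |p x - p y| ≤ c / -Real.log (S.μ (S.ball x R)).toReal := by
  have hyx : S.mB x y ≤ (S.μ (S.ball x R)).toReal :=
    ENNReal.toReal_mono (S.ball_lt_top x R).ne (measure_mono (S.ball_subset_ball hy.le))
  refine (hLH y (hy.le.trans hRb)).trans ?_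
  rcases (show 0 ≤ S.mB x y from ENNReal.toReal_nonneg).eq_or_lt with h0 | hpos
  · rw [← h0, Real.log_zero, neg_zero, _root_.div_zero]
    exact div_nonneg hc (neg_nonneg.2 (Real.log_nonpos ENNReal.toReal_nonneg hR.le))
  · exact div_le_div_of_nonneg_left hc (neg_pos.2 (Real.log_neg (hpos.trans_le hyx) hR))
      (neg_le_neg (Real.log_le_log hpos hyx))

variable {S} in
theorem revDoubling.le_div_sub_one_mul_measure_annulus {A B : ℝ} (h : S.revDoubling A B)
    (hA : 1 ≤ A) (hB : 1 < B) (x : X) {r : ℝ} (hr : 0 < r) :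
    (S.μ (S.ball x (A * r))).toReal ≤
      B / (B - 1) * (S.μ (S.ball x (A * r) \ S.ball x r)).toReal := by
  have hsub : S.ball x r ⊆ S.ball x (A * r) := S.ball_subset_ball (le_mul_of_one_le_left hr.le hA)
  have hBu : B * (S.μ (S.ball x r)).toReal ≤ (S.μ (S.ball x (A * r))).toReal := by
    have := ENNReal.toReal_mono (S.ball_lt_top x _).ne (h x r hr)
    rwa [ENNReal.toReal_mul, ENNReal.toReal_ofReal (by linarith)] at this
  rw [measure_sdiff hsub (S.ball_measurable x r).nullMeasurableSet (S.ball_lt_top x r).ne,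
    ENNReal.toReal_sub_of_le (measure_mono hsub) (S.ball_lt_top x _).ne, div_mul_eq_mul_div,
    le_div_iff₀ (by linarith)]
  nlinarith [(S.μ (S.ball x r)).toReal_nonneg]

end QMS

end TwoWeight

open TwoWeight in
theorem statement6_general {X : Type*} [MeasurableSpace X]
    (S : QMS X) (A B : ℝ) (hA : 1 < A) (hB : 1 < B)
    (hrd : S.revDoubling A B)
    (p : X → ℝ)
    (x₀ : X) (hLH : S.LHAt p x₀) :
    ∃ r₀ C : ℝ, 0 < r₀ ∧ 0 < C ∧ ∀ r : ℝ, 0 < r → r ≤ r₀ →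
      (S.μ (S.ball x₀ (A * r) \ S.ball x₀ r)).toReal ^
          (infOn p (S.ball x₀ (A * r) \ S.ball x₀ r) -
            supOn p (S.ball x₀ (A * r) \ S.ball x₀ r)) ≤ C := by
  obtain ⟨b, c, hb, hc, hLHx₀⟩ := hLH
  obtain ⟨r₁, hr₁small, hr₁⟩ := (((S.tendsto_measure_ball_toReal x₀).eventually
    (ge_mem_nhds (by norm_num : (0 : ℝ) < 1 / 2))).and self_mem_nhdsWithin).exists
  have hlogB : 0 ≤ Real.log (B / (B - 1)) :=
    Real.log_nonneg ((one_le_div (by linarith)).2 (by linarith))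
  refine ⟨min r₁ b / A, Real.exp (2 * c * (1 + Real.log (B / (B - 1)) / Real.log 2)),
    div_pos (lt_min hr₁ hb) (by linarith), Real.exp_pos _, fun r hr hr₀ => ?_⟩
  set E := S.ball x₀ (A * r) \ S.ball x₀ r
  set M := (S.μ (S.ball x₀ (A * r))).toReal
  have hAr : A * r ≤ min r₁ b := by rwa [le_div_iff₀' (by linarith)] at hr₀
  have hM : M ≤ 1 / 2 := (ENNReal.toReal_mono (S.ball_lt_top x₀ _).ne
    (measure_mono (S.ball_subset_ball (hAr.trans (min_le_left _ _))))).trans hr₁small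
  have hmM : (S.μ E).toReal ≤ M :=
    ENNReal.toReal_mono (S.ball_lt_top x₀ _).ne (measure_mono sdiff_subset)
  rcases (show 0 ≤ (S.μ E).toReal from ENNReal.toReal_nonneg).eq_or_lt with hm | hm
  · rw [← hm]
    exact (Real.zero_rpow_le_one _).trans (Real.one_le_exp (by positivity))
  have hosc : ∀ y ∈ E, |p x₀ - p y| ≤ c / -Real.log M := fun y hy =>
    S.abs_sub_le_of_mem_ball hc.le hLHx₀ (hAr.trans (min_le_right _ _)) (by linarith) hy.1
  have hE : E.Nonempty := nonempty_of_measure_ne_zero (ENNReal.toReal_pos_iff.1 hm).1.ne'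
  refine rpow_le_exp_of_le_mul hm hmM hM (hrd.le_div_sub_one_mul_measure_annulus hA.le hB x₀ hr)
    (by positivity) ?_
  rw [mul_div_assoc]
  exact neg_two_mul_le_infOn_sub_supOn hE hosc

open TwoWeight in
/-- Lemma 1.11. -/
theorem statement6 {X : Type*} [MeasurableSpace X] [Nonempty X]
    (S : QMS X) (hdub : S.doubling) (A B : ℝ) (hA : 1 < A) (hB : 1 < B)
    (hrd : S.revDoubling A B)
    (p : X → ℝ) (hpm : Measurable p)
    (hlow : 0 < infOn p Set.univ) (hbdd : BddAbove (Set.range p))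
    (x₀ : X) (hLH : S.LHAt p x₀) :
    ∃ r₀ C : ℝ, 0 < r₀ ∧ 0 < C ∧ ∀ r : ℝ, 0 < r → r ≤ r₀ →
      (S.μ (S.ball x₀ (A * r) \ S.ball x₀ r)).toReal ^
          (infOn p (S.ball x₀ (A * r) \ S.ball x₀ r) -
            supOn p (S.ball x₀ (A * r) \ S.ball x₀ r)) ≤ C :=
  statement6_general S A B hA hB hrd p x₀ hLH
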